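/- Let G be a Hausdorff locally compact group, φ a continuous endomorphism of G, and H a φ-invariant open normal subgroup of G. Then h_top(φ) = h_top(φ|_H) and the endomorphism φ̄ induced by φ on the (discrete) quotient G/H satisfies h_top(φ̄) = 0. -/

import Mathlib

open MeasureTheory Filter Topology Pointwise
open scoped ENNReal NNReal Classical

/-- The `n`-th `φ`-cotrajectory of `U`: `U ∩ φ⁻¹(U) ∩ … ∩ φ⁻⁽ⁿ⁻¹⁾(U)`. -/
def cotraj {G : Type*} (φ : G → G) (U : Set G) (n : ℕ) : Set G :=
  ⋂ k ∈ Finset.range n, (φ^[k]) ⁻¹' U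

/-- Topological entropy of a (continuous) endomorphism of a locally compact Hausdorff
topological group, computed with respect to a left Haar measure:
`h_top(φ) = sup_U limsup_n (−log μ(C_n(φ,U)))/n`, the supremum over all compact
neighborhoods `U` of `1`. -/
noncomputable def mulHtop {G : Type*} [Group G] [TopologicalSpace G] (φ : G → G) : ℝ≥0∞ :=
  letI : MeasurableSpace G := borel G
  haveI : BorelSpace G := ⟨rfl⟩
  if h : IsTopologicalGroup G ∧ T2Space G ∧ LocallyCompactSpace G then
    haveI := h.1
    haveI := h.2.1
    haveI := h.2.2
    ⨆ U ∈ {U : Set G | IsCompact U ∧ U ∈ 𝓝 (1 : G)},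
      Filter.atTop.limsup fun n : ℕ =>
        ENNReal.ofReal
          ((-Real.log ((MeasureTheory.Measure.haar (cotraj φ U n)).toReal)) / n)
  else 0

/-- The restriction of an endomorphism to an invariant subgroup
(junk value `1` if the subgroup is not invariant). -/
noncomputable def mulSubHom {G : Type*} [Group G] (φ : G →* G) (H : Subgroup G) : H →* H :=
  if h : H ≤ H.comap φ then (φ.domRestrict H).codRestrict H (fun x => h x.2) else 1

/-- The endomorphism induced on the quotient by an invariant normal subgroup
(junk value `1` if the subgroup is not invariant). -/
noncomputable def mulQuotHom {G : Type*} [Group G] (φ : G →* G) (H : Subgroup G) [H.Normal] :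
    G ⧸ H →* G ⧸ H :=
  if h : H ≤ H.comap φ then QuotientGroup.map H H φ h else 1

/-! Write `h(μ, φ, U) = limsup (−log μ(C_n(φ,U)))/n`. Shrinking `U` can only increase it, and
multiplying `μ` by a positive constant does not change it, so it does not depend on the Haar
measure. Since `H` is open, every compact neighbourhood of `1` can be shrunk into `H`; there the
cotrajectories for `φ` and for `φ|_H` are the same sets, and the Haar measure of `G` restricts to
a Haar measure of `H`, so the two suprema agree. On the discrete quotient every cotrajectory
contains the atom `{1}`, so its measure is bounded below and `h(μ, φ, U) = 0`. -/

section Cotraj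

variable {X : Type*}

lemma mem_cotraj {φ : X → X} {U : Set X} {n : ℕ} {x : X} :
    x ∈ cotraj φ U n ↔ ∀ k < n, φ^[k] x ∈ U := by
  simp [cotraj]

lemma cotraj_subset {φ : X → X} {U : Set X} {n : ℕ} (hn : n ≠ 0) : cotraj φ U n ⊆ U :=
  fun _ hx => mem_cotraj.1 hx 0 (Nat.pos_of_ne_zero hn)

lemma cotraj_mono {φ : X → X} {U V : Set X} (h : U ⊆ V) (n : ℕ) :
    cotraj φ U n ⊆ cotraj φ V n :=
  fun _ hx => mem_cotraj.2 fun k hk => h (mem_cotraj.1 hx k hk)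

lemma cotraj_preimage_of_semiconj {Y : Type*} {f : X → Y} {ψ : X → X} {φ : Y → Y}
    (h : Function.Semiconj f ψ φ) (U : Set Y) (n : ℕ) :
    cotraj ψ (f ⁻¹' U) n = f ⁻¹' cotraj φ U n := by
  ext x
  simp only [mem_cotraj, Set.mem_preimage, (h.iterate_right _).eq]

lemma cotraj_mem_nhds [TopologicalSpace X] {φ : X → X} (hφ : Continuous φ) {x : X}
    (hx : φ x = x) {U : Set X} (hU : U ∈ 𝓝 x) (n : ℕ) : cotraj φ U n ∈ 𝓝 x :=
  (biInter_finset_mem _).2 fun k _ =>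
    (hφ.iterate k).continuousAt.preimage_mem_nhds (by rwa [Function.iterate_fixed hx])

end Cotraj

noncomputable def cotrajEntropy {X : Type*} [MeasurableSpace X] (μ : Measure X) (φ : X → X)
    (U : Set X) : ℝ≥0∞ :=
  atTop.limsup fun n : ℕ => ENNReal.ofReal (-Real.log (μ (cotraj φ U n)).toReal / n)

lemma limsup_ofReal_neg_log_div_le {a b : ℕ → ℝ} {c : ℝ} (hc : 0 < c)
    (hab : ∀ᶠ n in atTop, 0 < b n ∧ c * b n ≤ a n) :
    atTop.limsup (fun n : ℕ => ENNReal.ofReal (-Real.log (a n) / n)) ≤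
      atTop.limsup (fun n : ℕ => ENNReal.ofReal (-Real.log (b n) / n)) := by
  set w := fun n : ℕ => ENNReal.ofReal (-Real.log (b n) / n)
  set t := fun n : ℕ => ENNReal.ofReal (-Real.log c / n)
  have ht : Tendsto t atTop (𝓝 0) := by
    simpa using ENNReal.tendsto_ofReal (tendsto_const_div_atTop_nhds_zero_nat (-Real.log c))
  calc atTop.limsup (fun n : ℕ => ENNReal.ofReal (-Real.log (a n) / n))
      ≤ atTop.limsup (w + t) := by
        refine limsup_le_limsup ?_
        filter_upwards [hab] with n ⟨hb, hle⟩
        have hlog : Real.log c + Real.log (b n) ≤ Real.log (a n) := by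
          rw [← Real.log_mul hc.ne' hb.ne']
          exact Real.log_le_log (by positivity) hle
        calc ENNReal.ofReal (-Real.log (a n) / n)
            ≤ ENNReal.ofReal (-Real.log (b n) / n + -Real.log c / n) := by
              rw [← add_div]
              gcongr
              linarith
          _ ≤ (w + t) n := ENNReal.ofReal_add_le
    _ = atTop.limsup w := ENNReal.limsup_add_of_right_tendsto_zero ht w

section Entropy

variable {X : Type*} [TopologicalSpace X] [MeasurableSpace X] (μ : Measure X) [μ.IsOpenPosMeasure]
  {φ : X → X} {x : X}

lemma toReal_measure_cotraj_pos (hφ : Continuous φ) (hx : φ x = x) {U : Set X} (hU : μ U ≠ ∞)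
    (hUx : U ∈ 𝓝 x) {n : ℕ} (hn : n ≠ 0) : 0 < (μ (cotraj φ U n)).toReal :=
  ENNReal.toReal_pos (μ.measure_pos_of_mem_nhds (cotraj_mem_nhds hφ hx hUx n)).ne'
    (measure_ne_top_of_subset (cotraj_subset hn) hU)

lemma cotrajEntropy_le_of_subset [IsFiniteMeasureOnCompacts μ] (hφ : Continuous φ) (hx : φ x = x)
    {U V : Set X} (hVU : V ⊆ U) (hUc : IsCompact U) (hVx : V ∈ 𝓝 x) :
    cotrajEntropy μ φ U ≤ cotrajEntropy μ φ V := by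
  refine limsup_ofReal_neg_log_div_le one_pos ?_
  filter_upwards [eventually_ne_atTop 0] with n hn
  refine ⟨toReal_measure_cotraj_pos μ hφ hx
    (measure_ne_top_of_subset hVU hUc.measure_ne_top) hVx hn, ?_⟩
  rw [one_mul]
  exact ENNReal.toReal_mono (measure_ne_top_of_subset (cotraj_subset hn) hUc.measure_ne_top)
    (measure_mono (cotraj_mono hVU n))

lemma cotrajEntropy_eq_zero_of_discreteTopology [DiscreteTopology X] [IsFiniteMeasureOnCompacts μ]
    (hx : φ x = x) {U : Set X} (hUc : IsCompact U) (hxU : x ∈ U) : cotrajEntropy μ φ U = 0 := by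
  have hx_pos : 0 < (μ {x}).toReal :=
    ENNReal.toReal_pos ((isOpen_discrete _).measure_ne_zero μ (Set.singleton_nonempty x))
      isCompact_singleton.measure_ne_top
  have hle : cotrajEntropy μ φ U ≤
      atTop.limsup fun n : ℕ => ENNReal.ofReal (-Real.log 1 / n) := by
    refine limsup_ofReal_neg_log_div_le hx_pos ?_
    filter_upwards [eventually_ne_atTop 0] with n hn
    have hx_mem : x ∈ cotraj φ U n := mem_cotraj.2 fun k _ => by rwa [Function.iterate_fixed hx]
    refine ⟨one_pos, ?_⟩
    rw [mul_one]
    exact ENNReal.toReal_mono (measure_ne_top_of_subset (cotraj_subset hn) hUc.measure_ne_top)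
      (measure_mono (Set.singleton_subset_iff.2 hx_mem))
  simpa using hle

end Entropy

section Haar

variable {G : Type*} [Group G] [TopologicalSpace G] [MeasurableSpace G]
  [IsTopologicalGroup G] [LocallyCompactSpace G] [BorelSpace G]

lemma cotrajEntropy_le_of_isHaarMeasure (μ ν : Measure G) [μ.IsHaarMeasure] [ν.IsHaarMeasure]
    {φ : G →* G} (hφ : Continuous φ) {U : Set G} (hUc : IsCompact U) (hU1 : U ∈ 𝓝 1) :
    cotrajEntropy μ φ U ≤ cotrajEntropy ν φ U := by
  refine limsup_ofReal_neg_log_div_le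
    (NNReal.coe_pos.2 (Measure.haarScalarFactor_pos_of_isHaarMeasure μ ν)) ?_
  filter_upwards [eventually_ne_atTop 0] with n hn
  refine ⟨toReal_measure_cotraj_pos ν hφ (map_one φ) hUc.measure_ne_top hU1 hn, le_of_eq ?_⟩
  rw [Measure.measure_isMulInvariant_eq_smul_of_isCompact_closure μ ν
    (hUc.closure_of_subset (cotraj_subset hn)), ENNReal.toReal_smul, NNReal.smul_def, smul_eq_mul]

lemma cotrajEntropy_eq_of_isHaarMeasure (μ ν : Measure G) [μ.IsHaarMeasure] [ν.IsHaarMeasure]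
    {φ : G →* G} (hφ : Continuous φ) {U : Set G} (hUc : IsCompact U) (hU1 : U ∈ 𝓝 1) :
    cotrajEntropy μ φ U = cotrajEntropy ν φ U :=
  le_antisymm (cotrajEntropy_le_of_isHaarMeasure μ ν hφ hUc hU1)
    (cotrajEntropy_le_of_isHaarMeasure ν μ hφ hUc hU1)

lemma mulHtop_eq_iSup [T2Space G] (φ : G → G) :
    mulHtop φ =
      ⨆ U ∈ {U : Set G | IsCompact U ∧ U ∈ 𝓝 (1 : G)}, cotrajEntropy Measure.haar φ U := by
  obtain rfl := ‹BorelSpace G›.measurable_eq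
  rw [mulHtop, dif_pos ⟨‹_›, ‹_›, ‹_›⟩]
  rfl

lemma cotrajEntropy_le_mulHtop [T2Space G] (φ : G → G) {U : Set G} (hUc : IsCompact U)
    (hU1 : U ∈ 𝓝 1) : cotrajEntropy Measure.haar φ U ≤ mulHtop φ :=
  mulHtop_eq_iSup φ ▸ le_iSup₂ (f := fun U (_ : U ∈ {U : Set G | IsCompact U ∧ U ∈ 𝓝 1}) =>
    cotrajEntropy Measure.haar φ U) U ⟨hUc, hU1⟩

end Haar

lemma mulHtop_eq_zero_of_discreteTopology {G : Type*} [Group G] [TopologicalSpace G]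
    [DiscreteTopology G] (φ : G →* G) : mulHtop φ = 0 := by
  borelize G
  rw [mulHtop_eq_iSup]
  exact nonpos_iff_eq_zero.1 <| iSup₂_le fun U hU =>
    (cotrajEntropy_eq_zero_of_discreteTopology _ (map_one φ) hU.1 (mem_of_mem_nhds hU.2)).le

lemma MeasurableEmbedding.cotrajEntropy_comap {X Y : Type*} [MeasurableSpace X]
    [MeasurableSpace Y] {f : X → Y} (hf : MeasurableEmbedding f) (μ : Measure Y) {ψ : X → X}
    {φ : Y → Y} (h : Function.Semiconj f ψ φ) {U : Set Y} (hU : U ⊆ Set.range f) :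
    cotrajEntropy (μ.comap f) ψ (f ⁻¹' U) = cotrajEntropy μ φ U := by
  refine limsup_congr ?_
  filter_upwards [eventually_ne_atTop 0] with n hn
  rw [cotraj_preimage_of_semiconj h, hf.comap_preimage,
    Set.inter_eq_left.2 ((cotraj_subset hn).trans hU)]

section Subgroup

variable {G : Type*} [Group G] {φ : G →* G} {H : Subgroup G}

lemma semiconj_coe_mulSubHom (hinv : H ≤ H.comap φ) :
    Function.Semiconj ((↑) : H → G) (mulSubHom φ H) φ := by
  intro x
  rw [mulSubHom, dif_pos hinv]
  rfl

variable [TopologicalSpace G]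

lemma continuous_mulSubHom (hφ : Continuous φ) (hinv : H ≤ H.comap φ) :
    Continuous (mulSubHom φ H) :=
  continuous_induced_rng.2 <| (semiconj_coe_mulSubHom hinv).comp_eq ▸
    hφ.comp continuous_subtype_val

variable [IsTopologicalGroup G] [LocallyCompactSpace G]

lemma cotrajEntropy_haar_mulSubHom_preimage [MeasurableSpace G] [BorelSpace G]
    [LocallyCompactSpace H] (hφ : Continuous φ) (hopen : IsOpen (H : Set G))
    (hinv : H ≤ H.comap φ) {U : Set G} (hUc : IsCompact U) (hU1 : U ∈ 𝓝 1) (hUH : U ⊆ H) :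
    cotrajEntropy Measure.haar (mulSubHom φ H) (((↑) : H → G) ⁻¹' U) =
      cotrajEntropy Measure.haar φ U := by
  have : (Measure.haar.comap ((↑) : H → G)).IsHaarMeasure :=
    Measure.IsHaarMeasure.comap Measure.haar (mH := inferInstance) (f := H.subtype)
      hopen.isOpenEmbedding_subtypeVal
  refine (cotrajEntropy_eq_of_isHaarMeasure _ (Measure.haar.comap ((↑) : H → G))
    (continuous_mulSubHom hφ hinv) (IsInducing.subtypeVal.isCompact_preimage' hUc (by simpa))
    (continuous_subtype_val.continuousAt.preimage_mem_nhds hU1)).trans ?_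
  exact (MeasurableEmbedding.subtype_coe hopen.measurableSet).cotrajEntropy_comap _
    (semiconj_coe_mulSubHom hinv) (by simpa)

variable [T2Space G]

lemma mulHtop_mulSubHom_le (hφ : Continuous φ) (hopen : IsOpen (H : Set G))
    (hinv : H ≤ H.comap φ) : mulHtop (mulSubHom φ H) ≤ mulHtop φ := by
  borelize G
  have : LocallyCompactSpace H := hopen.locallyCompactSpace
  rw [mulHtop_eq_iSup]
  refine iSup₂_le fun V ⟨hVc, hV1⟩ => ?_
  have hUc := hVc.image continuous_subtype_val
  have hU1 : (↑) '' V ∈ 𝓝 (1 : G) := hopen.isOpenMap_subtype_val.image_mem_nhds hV1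
  calc cotrajEntropy Measure.haar (mulSubHom φ H) V
      = cotrajEntropy Measure.haar φ ((↑) '' V) := by
        simpa [Subtype.val_injective.preimage_image] using
          cotrajEntropy_haar_mulSubHom_preimage hφ hopen hinv hUc hU1
            (Subtype.coe_image_subset _ _)
    _ ≤ mulHtop φ := cotrajEntropy_le_mulHtop _ hUc hU1

lemma le_mulHtop_mulSubHom (hφ : Continuous φ) (hopen : IsOpen (H : Set G))
    (hinv : H ≤ H.comap φ) : mulHtop φ ≤ mulHtop (mulSubHom φ H) := by
  borelize G
  have : LocallyCompactSpace H := hopen.locallyCompactSpace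
  rw [mulHtop_eq_iSup]
  refine iSup₂_le fun U ⟨hUc, hU1⟩ => ?_
  obtain ⟨K, hK1, hKH, hKc⟩ := local_compact_nhds (hopen.mem_nhds H.one_mem)
  have hUKc := hUc.inter_right hKc.isClosed
  have hUK1 := inter_mem hU1 hK1
  have hUKH : U ∩ K ⊆ H := Set.inter_subset_right.trans hKH
  calc cotrajEntropy Measure.haar φ U
      ≤ cotrajEntropy Measure.haar φ (U ∩ K) :=
        cotrajEntropy_le_of_subset _ hφ (map_one φ) Set.inter_subset_left hUc hUK1
    _ = cotrajEntropy Measure.haar (mulSubHom φ H) ((↑) ⁻¹' (U ∩ K)) :=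
        (cotrajEntropy_haar_mulSubHom_preimage hφ hopen hinv hUKc hUK1 hUKH).symm
    _ ≤ mulHtop (mulSubHom φ H) :=
        cotrajEntropy_le_mulHtop _ (IsInducing.subtypeVal.isCompact_preimage' hUKc (by simpa))
          (continuous_subtype_val.continuousAt.preimage_mem_nhds hUK1)

end Subgroup

/-- If `G` is a locally compact group, `φ` a continuous endomorphism and
`H` a `φ`-invariant open normal subgroup, then `h_top(φ) = h_top(φ|_H)` and the induced
endomorphism on the discrete quotient `G/H` has zero topological entropy. -/
theorem entropy_eq_of_open_invariant_normal_subgroup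
    (G : Type*) [Group G] [TopologicalSpace G] [IsTopologicalGroup G]
    [T2Space G] [LocallyCompactSpace G]
    (φ : G →* G) (hφ : Continuous φ) (H : Subgroup G) [H.Normal]
    (hopen : IsOpen (H : Set G)) (hinv : H ≤ H.comap φ) :
    mulHtop ⇑φ = mulHtop ⇑(mulSubHom φ H) ∧ mulHtop ⇑(mulQuotHom φ H) = 0 :=
  have : DiscreteTopology (G ⧸ H) := QuotientGroup.discreteTopology hopen
  ⟨(le_mulHtop_mulSubHom hφ hopen hinv).antisymm (mulHtop_mulSubHom_le hφ hopen hinv),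
     mulHtop_eq_zero_of_discreteTopology _⟩
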